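/- For every finite word w over a finite alphabet, the number of distinct nonempty palindromic factors (contiguous subwords) of w is at most |w|. -/

import Mathlib

/-!
Send each palindromic factor `p` of `w` to the end position of its first occurrence, i.e. the
least `n` with `p` a suffix of `w.take n`; this lands in `[1, |w|]`. The map is injective: if
two distinct palindromes first end at the same `n`, the shorter one `p` is a suffix of the
longer one `q`, hence also a prefix of `q`, so `p` already occurs ending strictly before `n`.
-/

namespace List

variable {α : Type*} {p q w : List α}

theorem IsInfix.exists_isSuffix_take (h : p <:+: w) : ∃ n ≤ w.length, p <:+ w.take n := by
  obtain ⟨t, hpt, htw⟩ := infix_iff_suffix_prefix.mp h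
  exact ⟨t.length, htw.length_le, prefix_iff_eq_take.mp htw ▸ hpt⟩

theorem IsSuffix.isPrefix_of_reverse_eq (h : p <:+ q) (hp : p.reverse = p)
    (hq : q.reverse = q) : p <+: q :=
  hp ▸ hq ▸ reverse_prefix.mpr h

theorem IsPrefix.isSuffix_take_of_isSuffix (hpq : p <+: q) (hqw : q <:+ w) :
    p <:+ w.take (w.length - q.length + p.length) := by
  obtain ⟨u, rfl⟩ := hqw
  obtain ⟨r, rfl⟩ := hpq
  have hlen : (u ++ (p ++ r)).length - (p ++ r).length + p.length = u.length + p.length := by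
    simp only [length_append]; omega
  rw [hlen, ← append_assoc, take_left' (by simp)]
  exact suffix_append u p

theorem eq_of_reverse_eq_of_isSuffix_take_of_forall_lt {n : ℕ} (hp : p.reverse = p)
    (hq : q.reverse = q) (hpn : p <:+ w.take n) (hqn : q <:+ w.take n)
    (hpmin : ∀ m < n, ¬ p <:+ w.take m) (hqmin : ∀ m < n, ¬ q <:+ w.take m) : p = q := by
  wlog hpq : p <:+ q generalizing p q
  · exact (this hq hp hqn hpn hqmin hpmin
      ((suffix_or_suffix_of_suffix hpn hqn).resolve_left hpq)).symm
  by_contra hne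
  have hlt : p.length < q.length :=
    hpq.length_le.lt_of_ne fun hlen => hne (hpq.eq_of_length hlen)
  have hearlier := (hpq.isPrefix_of_reverse_eq hp hq).isSuffix_take_of_isSuffix hqn
  have hqlen := hqn.length_le
  have htake_len : (w.take n).length ≤ n := length_take_le n w
  rw [take_take, Nat.min_eq_left (by omega)] at hearlier
  exact hpmin _ (by omega) hearlier

theorem card_le_length_of_forall_reverse_eq_isInfix {S : Finset (List α)}
    (hS : ∀ p ∈ S, p ≠ [] ∧ p.reverse = p ∧ p <:+: w) : S.card ≤ w.length := by
  classical
  have hocc : ∀ p ∈ S, ∃ n, p <:+ w.take n := fun p hp =>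
    let ⟨n, _, hn⟩ := (hS p hp).2.2.exists_isSuffix_take; ⟨n, hn⟩
  let firstEnd : List α → ℕ := fun p => if h : ∃ n, p <:+ w.take n then Nat.find h else 0
  have hfirstEnd : ∀ p (hp : p ∈ S), firstEnd p = Nat.find (hocc p hp) :=
    fun p hp => dif_pos (hocc p hp)
  calc S.card ≤ (Finset.Icc 1 w.length).card := by
        refine Finset.card_le_card_of_injOn firstEnd (fun p hp => ?_) (fun p hp q hq hpq => ?_)
        · obtain ⟨hne, -, hinf⟩ := hS p hp
          obtain ⟨n, hnw, hn⟩ := hinf.exists_isSuffix_take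
          have hpos : Nat.find (hocc p hp) ≠ 0 := fun h0 =>
            hne (suffix_nil.mp (by simpa [h0] using Nat.find_spec (hocc p hp)))
          rw [Finset.mem_coe, Finset.mem_Icc, hfirstEnd p hp]
          exact ⟨Nat.one_le_iff_ne_zero.mpr hpos, (Nat.find_min' _ hn).trans hnw⟩
        · rw [hfirstEnd p hp, hfirstEnd q hq] at hpq
          exact eq_of_reverse_eq_of_isSuffix_take_of_forall_lt (hS p hp).2.1 (hS q hq).2.1
            (Nat.find_spec (hocc p hp)) (hpq ▸ Nat.find_spec (hocc q hq))
            (fun m hm => Nat.find_min _ hm) (fun m hm => Nat.find_min _ (hpq ▸ hm))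
    _ = w.length := by simp

end List

theorem palindromic_factors_card_le_length_general {A : Type*} [DecidableEq A]
    (w : List A) :
    ((w.sublists.filter (fun p => p ≠ [] ∧ p.reverse = p ∧ p <:+: w)).dedup).length
      ≤ w.length := by
  rw [← List.card_toFinset]
  refine List.card_le_length_of_forall_reverse_eq_isInfix fun p hp => ?_
  simpa using (List.mem_filter.mp (List.mem_toFinset.mp hp)).2

theorem palindromic_factors_card_le_length {A : Type*} [Fintype A] [DecidableEq A]
    (w : List A) :
    ((w.sublists.filter (fun p => p ≠ [] ∧ p.reverse = p ∧ p <:+: w)).dedup).length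
      ≤ w.length :=
  palindromic_factors_card_le_length_general w
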